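/- For n ≥ 1, with the convention σ_x(m) = 0 for m ≤ 0, the divisor power-sum function satisfies σ_x(n) = h_x(n) + ∑_{m≥1} (-1)^{m-1} [ σ_x(n - m(3m-1)/2) + σ_x(n - m(3m+1)/2) ], where h_x(n) = ∑_{i ≥ 2, b_i = n} (-1)^{s(2i-1)} b_i(x), with b_i(x) = ∑_{j ∈ S_i} j^x and b_i = ∑_{j ∈ S_i} j, where i - 1 = ∑_{j ∈ S_i} 2^{j-1} is the binary expansion of i-1. -/

import Mathlib

/-- Binary digit sum: number of ones in the binary expansion of `n`. -/
def binDigitSum (n : ℕ) : ℕ := (Nat.digits 2 n).sum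

/-- `b_i(x) = ∑_{j ∈ S_i} j^x` where `i - 1 = ∑_{j ∈ S_i} 2^{j-1}` is the binary
expansion of `i-1` (all bits of `i-1` occur at positions `j-1 < i`). -/
noncomputable def bNatSeq (x : ℝ) (i : ℕ) : ℝ :=
  ∑ j ∈ Finset.Icc 1 i, if (i - 1).testBit (j - 1) then (j : ℝ) ^ x else 0

/-- `b_i = b_i(1) = ∑_{j ∈ S_i} j`. -/
def bNat (i : ℕ) : ℕ :=
  ∑ j ∈ Finset.Icc 1 i, if (i - 1).testBit (j - 1) then j else 0

/-- `σ_x(n) = ∑_{d ∣ n} d^x` for `n ≥ 1`, and `0` for `n ≤ 0`. -/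
noncomputable def sigmaX (x : ℝ) (n : ℤ) : ℝ :=
  if 0 < n then ∑ d ∈ n.toNat.divisors, (d : ℝ) ^ x else 0

/-
Reading the bits of `i - 1`, shifted up by one, as a set `T` gives `b_i = ∑ T`,
`b_i(x) = ∑_{j ∈ T} j^x` and `s(2i - 1) = |T| + 1`; so `h_x(n)` is the sum of
`(-1)^(|T|+1) ∑_{j ∈ T} j^x` over the partitions `T` of `n` into distinct parts. Marking one part
`j` of such a partition and weighting it by `j^x` gives
  `∑_T (-1)^|T| (∑_{j ∈ T} j^x) q^(∑ T) = -∏_j (1 - q^j) · ∑_j j^x q^j / (1 - q^j)`,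
and `∑_j j^x q^j / (1 - q^j) = ∑_m σ_x(m) q^m`. Hence `h_x(n) = ∑_k e_k σ_x(n - k)` with `e_k` the
coefficients of `∏_j (1 - q^j)`, which Euler's pentagonal number theorem identifies.
-/

open Finset PowerSeries

theorem binDigitSum_eq_length_bitIndices (m : ℕ) : binDigitSum m = m.bitIndices.length := by
  induction m using Nat.strong_induction_on with
  | _ m ih =>
    rcases Nat.eq_zero_or_pos m with rfl | hm
    · simp [binDigitSum]
    obtain ⟨k, rfl | rfl⟩ := Nat.even_or_odd' m
    · have hk : k < 2 * k := by omega
      rw [binDigitSum, Nat.digits_def' one_lt_two hm, List.sum_cons, ← binDigitSum,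
        Nat.mul_div_cancel_left k two_pos, ih k hk, Nat.bitIndices_two_mul]
      simp
    · have hk : k < 2 * k + 1 := by omega
      rw [binDigitSum, Nat.digits_def' one_lt_two hm, List.sum_cons, ← binDigitSum,
        Nat.mul_add_div two_pos, Nat.div_eq_of_lt one_lt_two, add_zero, ih k hk,
        Nat.bitIndices_two_mul_add_one]
      simp [add_comm]

theorem sum_range_two_pow_bitIndices {M : Type*} [AddCommMonoid M] (g : Finset ℕ → M)
    (n : ℕ) :
    ∑ m ∈ range (2 ^ n), g m.bitIndices.toFinset = ∑ T ∈ (range n).powerset, g T := by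
  refine sum_nbij' (fun m ↦ m.bitIndices.toFinset) (fun T ↦ ∑ i ∈ T, 2 ^ i) ?_ ?_ ?_ ?_ ?_
  · intro m hm
    simp only [mem_powerset, mem_range] at hm ⊢
    intro i hi
    simp only [List.mem_toFinset] at hi
    exact mem_range.2 <| (Nat.pow_lt_pow_iff_right (by norm_num)).1
      ((Nat.two_pow_le_of_mem_bitIndices hi).trans_lt hm)
  · intro T hT
    simp only [mem_powerset, mem_range] at hT ⊢
    exact Nat.geomSum_lt le_rfl fun k hk ↦ by simpa using hT hk
  · intro m _; simp
  · intro T _; simp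
  · intro _ _; rfl

theorem sum_Icc_ite_testBit {M : Type*} [AddCommMonoid M] (f : ℕ → M) (m : ℕ) :
    ∑ j ∈ Icc 1 (m + 1), (if m.testBit (j - 1) then f j else 0) =
      ∑ t ∈ m.bitIndices.toFinset, f (t + 1) := by
  rw [← Finset.Ico_add_one_right_eq_Icc, sum_Ico_eq_sum_range]
  simp only [add_tsub_cancel_right, add_comm 1]
  rw [← sum_filter]
  congr 1
  ext t
  simp only [mem_filter, mem_range, List.mem_toFinset, Nat.mem_bitIndices, and_iff_right_iff_imp]
  intro ht
  have := Nat.two_pow_le_of_mem_bitIndices (Nat.mem_bitIndices.2 ht)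
  have := Nat.lt_two_pow_self (n := t)
  omega

theorem bNat_succ (m : ℕ) : bNat (m + 1) = ∑ t ∈ m.bitIndices.toFinset, (t + 1) :=
  sum_Icc_ite_testBit (fun j ↦ j) m

theorem bNatSeq_succ (x : ℝ) (m : ℕ) :
    bNatSeq x (m + 1) = ∑ t ∈ m.bitIndices.toFinset, ((t + 1 : ℕ) : ℝ) ^ x :=
  sum_Icc_ite_testBit (fun j : ℕ ↦ (j : ℝ) ^ x) m

theorem binDigitSum_two_mul_succ_sub_one (m : ℕ) :
    binDigitSum (2 * (m + 1) - 1) = #m.bitIndices.toFinset + 1 := by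
  rw [show 2 * (m + 1) - 1 = 2 * m + 1 by omega, binDigitSum_eq_length_bitIndices,
    Nat.bitIndices_two_mul_add_one, List.toFinset_card_of_nodup Nat.bitIndices_nodup]
  simp

theorem sum_powerset_range_ite_sum_succ {M : Type*} [AddCommMonoid M] (g : Finset ℕ → M)
    {n N : ℕ} (h : n ≤ N) :
    ∑ T ∈ (range N).powerset, (if ∑ t ∈ T, (t + 1) = n then g T else 0) =
      ∑ T ∈ (range n).powerset, (if ∑ t ∈ T, (t + 1) = n then g T else 0) := by
  refine (sum_subset (powerset_mono.2 (range_mono h)) fun T _ hT ↦ if_neg ?_).symm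
  obtain ⟨t, ht, htn⟩ := not_subset.1 (mt mem_powerset.2 hT)
  have := single_le_sum (f := (· + 1)) (fun _ _ ↦ Nat.zero_le _) ht
  simp only [mem_range, not_lt] at htn
  omega

theorem sum_Icc_bNat_eq_sum_powerset (x : ℝ) (n : ℕ) :
    ∑ i ∈ Icc 2 (2 ^ n),
        (if bNat i = n then (-1 : ℝ) ^ binDigitSum (2 * i - 1) * bNatSeq x i else 0) =
      ∑ T ∈ (range n).powerset, if ∑ t ∈ T, (t + 1) = n
        then (-1) ^ (#T + 1) * ∑ t ∈ T, ((t + 1 : ℕ) : ℝ) ^ x else 0 := by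
  set F : ℕ → ℝ := fun i ↦
    if bNat i = n then (-1 : ℝ) ^ binDigitSum (2 * i - 1) * bNatSeq x i else 0
  have hsub : Icc 2 (2 ^ n) ⊆ range (2 ^ n + 1) := fun i hi ↦ by
    simp only [mem_Icc, mem_range] at hi ⊢; omega
  have hsmall : ∀ i < 2, F i = 0 := fun i hi ↦ by
    interval_cases i <;> simp [F, bNatSeq]
  rw [sum_subset hsub fun i hi hi' ↦
      hsmall i (by simp only [mem_Icc, mem_range] at hi hi'; omega),
    sum_range_succ', hsmall 0 two_pos, add_zero, ← sum_range_two_pow_bitIndices]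
  simp only [F, bNat_succ, bNatSeq_succ, binDigitSum_two_mul_succ_sub_one]

theorem Finset.sum_powerset_filter_mem_prod {ι R : Type*} [CommSemiring R] [DecidableEq ι]
    (s : Finset ι) (b : ι → R) {i : ι} (hi : i ∈ s) :
    ∑ T ∈ s.powerset with i ∈ T, ∏ j ∈ T, b j = b i * ∏ j ∈ s.erase i, (1 + b j) := by
  rw [← insert_erase hi, sum_filter, sum_powerset_insert (notMem_erase i s),
    erase_insert_eq_erase, erase_idem, prod_one_add, mul_sum]
  simp only [mem_insert_self, if_true]
  rw [sum_eq_zero (fun T hT ↦ if_neg fun h ↦ notMem_erase i s (mem_powerset.1 hT h)), zero_add]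
  exact sum_congr rfl fun T hT ↦ prod_insert fun h ↦ notMem_erase i s (mem_powerset.1 hT h)

theorem Finset.sum_powerset_prod_neg_mul_sum {ι R : Type*} [CommRing R] [DecidableEq ι]
    (s : Finset ι) (a w : ι → R) :
    ∑ T ∈ s.powerset, (∏ j ∈ T, -a j) * ∑ i ∈ T, w i =
      -∑ i ∈ s, w i * (a i * ∏ j ∈ s.erase i, (1 - a j)) := by
  simp_rw [mul_sum]
  rw [sum_comm' (t' := s) (s' := fun i ↦ s.powerset.filter (i ∈ ·))]
  · rw [← sum_neg_distrib]
    refine sum_congr rfl fun i hi ↦ ?_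
    rw [← sum_mul, sum_powerset_filter_mem_prod s _ hi]
    simp only [sub_eq_add_neg]; ring
  · intro T i
    simp only [mem_powerset, mem_filter]
    tauto

theorem sum_Icc_neg_natCast_self {M : Type*} [AddCommGroup M] (g : ℤ → M) (n : ℕ) :
    ∑ j ∈ Icc (-n : ℤ) n, g j = g 0 + ∑ m ∈ Icc 1 n, (g m + g (-m)) := by
  induction n with
  | zero => simp
  | succ n ih =>
    rw [Nat.cast_succ, sum_Icc_succ_eq_add_endpoints, ih, sum_Icc_succ_top (by omega)]
    push_cast; abel

theorem natAbs_le_pentagonal (j : ℤ) : j.natAbs ≤ pentagonal j := by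
  have h := two_mul_natCast_pentagonal j
  zify
  rcases le_or_gt 0 j with hj | hj
  · rw [abs_of_nonneg hj]; nlinarith
  · rw [abs_of_neg hj]; nlinarith

theorem pentagonal_natCast (m : ℕ) : pentagonal m = m * (3 * m - 1) / 2 := by
  rcases m with _ | m
  · rfl
  · zify [show 1 ≤ 3 * (m + 1) by omega]
    rw [natCast_pentagonal]

theorem pentagonal_neg_natCast (m : ℕ) : pentagonal (-m) = m * (3 * m + 1) / 2 := by
  zify
  rw [natCast_pentagonal]
  ring_nf

namespace PowerSeries

variable (R : Type*) [CommRing R]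

def posMultiples (j : ℕ) : R⟦X⟧ := mk fun b ↦ if 0 < b ∧ j ∣ b then 1 else 0

variable {R}

@[simp]
theorem coeff_posMultiples (j b : ℕ) :
    coeff b (posMultiples R j) = if 0 < b ∧ j ∣ b then 1 else 0 :=
  coeff_mk _ _

theorem one_sub_X_pow_mul_posMultiples {j : ℕ} (hj : 0 < j) :
    (1 - X ^ j) * posMultiples R j = X ^ j := by
  ext b
  rw [sub_mul, one_mul, map_sub, coeff_X_pow_mul', coeff_posMultiples, coeff_posMultiples,
    coeff_X_pow]
  rcases lt_trichotomy b j with hb | rfl | hb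
  · have : ¬ (0 < b ∧ j ∣ b) := fun h ↦ absurd (Nat.le_of_dvd h.1 h.2) (by omega)
    simp [this, hb.ne, hb.not_ge]
  · simp [hj]
  · have : j ∣ b - j ↔ j ∣ b := by simp [Nat.dvd_sub_self_right, hb.not_ge]
    simp [this, hb.le, hb.ne', show 0 < b - j by omega, show 0 < b by omega]

theorem coeff_sum_C_mul_posMultiples (s : Finset ℕ) (w : ℕ → R) (b : ℕ) :
    coeff b (∑ t ∈ s, C (w t) * posMultiples R (t + 1)) =
      ∑ t ∈ s, if 0 < b ∧ t + 1 ∣ b then w t else 0 := by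
  simp only [map_sum, coeff_C_mul, coeff_posMultiples, mul_ite, mul_one, mul_zero]

theorem prod_one_sub_X_pow_mul_sum_posMultiples (s : Finset ℕ) (w : ℕ → R) :
    (∏ t ∈ s, (1 - X ^ (t + 1))) * ∑ t ∈ s, C (w t) * posMultiples R (t + 1) =
      -∑ T ∈ s.powerset, (∏ t ∈ T, -X ^ (t + 1)) * ∑ t ∈ T, C (w t) := by
  rw [sum_powerset_prod_neg_mul_sum, neg_neg, mul_sum]
  refine sum_congr rfl fun t ht ↦ ?_
  rw [← one_sub_X_pow_mul_posMultiples (R := R) t.succ_pos, mul_comm (1 - _), mul_assoc,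
    mul_prod_erase s (fun u ↦ (1 - X ^ (u + 1) : R⟦X⟧)) ht]
  ring

theorem coeff_prod_one_sub_X_pow_mul_sum_posMultiples (s : Finset ℕ) (w : ℕ → R) (n : ℕ) :
    coeff n ((∏ t ∈ s, (1 - X ^ (t + 1))) * ∑ t ∈ s, C (w t) * posMultiples R (t + 1)) =
      ∑ T ∈ s.powerset,
        if ∑ t ∈ T, (t + 1) = n then (-1) ^ (#T + 1) * ∑ t ∈ T, w t else 0 := by
  rw [prod_one_sub_X_pow_mul_sum_posMultiples, map_neg, map_sum, ← sum_neg_distrib]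
  refine sum_congr rfl fun T _ ↦ ?_
  rw [prod_neg, prod_pow_eq_pow_sum, ← map_sum,
    show ((-1) ^ #T * X ^ (∑ t ∈ T, (t + 1)) * C (∑ t ∈ T, w t) : R⟦X⟧) =
      C ((-1) ^ #T * ∑ t ∈ T, w t) * X ^ ∑ t ∈ T, (t + 1) by simp; ring,
    coeff_C_mul_X_pow]
  simp only [eq_comm (a := n)]
  split_ifs <;> simp [pow_succ]

theorem sum_range_coeff_pentagonalSeries_mul {n : ℕ} (f : ℕ → R)
    (hf : ∀ k, n < k → f k = 0) :
    ∑ k ∈ range (n + 1), coeff k (pentagonalSeries R) * f k =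
      f 0 + ∑ m ∈ Icc 1 n, (-1) ^ m * (f (pentagonal m) + f (pentagonal (-m))) := by
  set J := Icc (-n : ℤ) n
  have hJ : ∀ j, pentagonal j ≤ n → j ∈ J := fun j hj ↦ by
    have := natAbs_le_pentagonal j
    simp only [J, mem_Icc]; omega
  have hsub : range (n + 1) ⊆ range (n + 1) ∪ J.image pentagonal := subset_union_left
  rw [sum_subset hsub fun k hk hk' ↦ by
        rw [hf k (by simp_all), mul_zero],
    ← sum_subset (subset_union_right (s₁ := range (n + 1))) fun k hk hk' ↦ by
        rw [coeff_pentagonalSeries_eq_zero, zero_mul]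
        rintro ⟨j, rfl⟩
        have : pentagonal j ≤ n := by simpa [hk'] using hk
        exact hk' (mem_image_of_mem _ (hJ j this)),
    sum_image fun _ _ _ _ h ↦ pentagonal_injective h]
  simp only [coeff_pentagonalSeries_pentagonal]
  rw [sum_Icc_neg_natCast_self]
  simp [mul_add, pentagonal_def]

variable (R) in
theorem exists_coeff_prod_range_eq_coeff_pentagonalSeries (n : ℕ) :
    ∃ N, n ≤ N ∧ ∀ a ≤ n,
      coeff a (∏ t ∈ range N, (1 - X ^ (t + 1) : R⟦X⟧)) = coeff a (pentagonalSeries R) := by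
  have h := (Filter.eventually_all_finset (range (n + 1))).2
    fun a _ ↦ coeff_prod_one_sub_X_pow_eventually_eq R a
  obtain ⟨N, hcoeff, hN⟩ :=
    ((Filter.tendsto_finset_range.eventually h).and (Filter.eventually_ge_atTop n)).exists
  exact ⟨N, hN, fun a ha ↦ hcoeff a (mem_range.2 (Nat.lt_succ_of_le ha))⟩

end PowerSeries

theorem sum_range_ite_dvd_eq_sigmaX (x : ℝ) {b N : ℕ} (hb : b ≤ N) :
    ∑ t ∈ range N, (if 0 < b ∧ t + 1 ∣ b then ((t + 1 : ℕ) : ℝ) ^ x else 0) =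
      sigmaX x b := by
  rcases Nat.eq_zero_or_pos b with rfl | hb0
  · simp [sigmaX]
  have hdiv : (Ico 1 (N + 1)).filter (· ∣ b) = b.divisors := by
    ext d
    simp only [mem_filter, mem_Ico, Nat.mem_divisors]
    constructor
    · rintro ⟨_, hd⟩
      exact ⟨hd, hb0.ne'⟩
    · rintro ⟨hd, -⟩
      have := Nat.le_of_dvd hb0 hd
      exact ⟨⟨Nat.pos_of_dvd_of_pos hd hb0, by omega⟩, hd⟩
  rw [sigmaX, if_pos (by exact_mod_cast hb0), Int.toNat_natCast, ← hdiv, sum_filter,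
    sum_Ico_eq_sum_range, add_tsub_cancel_right]
  simp [hb0, add_comm]

theorem sum_powerset_eq_sum_coeff_pentagonalSeries_mul_sigmaX (x : ℝ) (n : ℕ) :
    ∑ T ∈ (range n).powerset, (if ∑ t ∈ T, (t + 1) = n
        then (-1) ^ (#T + 1) * ∑ t ∈ T, ((t + 1 : ℕ) : ℝ) ^ x else 0) =
      ∑ k ∈ range (n + 1), coeff k (pentagonalSeries ℝ) * sigmaX x ((n : ℤ) - k) := by
  obtain ⟨N, hnN, hpent⟩ := exists_coeff_prod_range_eq_coeff_pentagonalSeries ℝ n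
  rw [← sum_powerset_range_ite_sum_succ _ hnN, ← coeff_prod_one_sub_X_pow_mul_sum_posMultiples,
    coeff_mul, Nat.sum_antidiagonal_eq_sum_range_succ (fun a b ↦ coeff a _ * coeff b _)]
  refine sum_congr rfl fun k hk ↦ ?_
  have hk : k ≤ n := Nat.lt_succ_iff.1 (mem_range.1 hk)
  rw [hpent k hk, coeff_sum_C_mul_posMultiples, sum_range_ite_dvd_eq_sigmaX x (by omega),
    Nat.cast_sub hk]

theorem stmt_12_general (x : ℝ) (n : ℕ) :
    sigmaX x n =
      (∑ i ∈ Finset.Icc 2 (2 ^ n),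
        if bNat i = n then (-1 : ℝ) ^ binDigitSum (2 * i - 1) * bNatSeq x i else 0)
      + ∑ m ∈ Finset.Icc 1 n, (-1 : ℝ) ^ (m - 1) *
          (sigmaX x ((n : ℤ) - (m * (3 * m - 1) / 2 : ℕ)) +
           sigmaX x ((n : ℤ) - (m * (3 * m + 1) / 2 : ℕ))) := by
  rw [sum_Icc_bNat_eq_sum_powerset, sum_powerset_eq_sum_coeff_pentagonalSeries_mul_sigmaX,
    sum_range_coeff_pentagonalSeries_mul (fun k ↦ sigmaX x ((n : ℤ) - k))
      fun k hk ↦ if_neg (by omega),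
    add_assoc, ← sum_add_distrib, sum_eq_zero, Nat.cast_zero, sub_zero, add_zero]
  intro m hm
  obtain ⟨k, rfl⟩ := Nat.exists_eq_add_of_le' (mem_Icc.1 hm).1
  rw [pentagonal_natCast, pentagonal_neg_natCast, ← add_mul, add_tsub_cancel_right, pow_succ]
  ring

/-- Theorem 2: pentagonal recursion for `σ_x` with compensating sequence
`h_x(n) = ∑_{i ≥ 2, b_i = n} (-1)^{s(2i-1)} b_i(x)` (all such `i` satisfy `i ≤ 2^n`). -/
theorem stmt_12 (x : ℝ) (n : ℕ) (hn : 1 ≤ n) :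
    sigmaX x n =
      (∑ i ∈ Finset.Icc 2 (2 ^ n),
        if bNat i = n then (-1 : ℝ) ^ binDigitSum (2 * i - 1) * bNatSeq x i else 0)
      + ∑ m ∈ Finset.Icc 1 n, (-1 : ℝ) ^ (m - 1) *
          (sigmaX x ((n : ℤ) - (m * (3 * m - 1) / 2 : ℕ)) +
           sigmaX x ((n : ℤ) - (m * (3 * m + 1) / 2 : ℕ))) :=
  stmt_12_general x n
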